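/- For a real number x with 0 ≤ x < 1 and a nonnegative integer k, the sum Σ_{n=k}^∞ n·n!·xⁿ/((n−k)!)² equals e^x · x^k · Σ_{i=0}^{k} (k!/i!)·[ C(k+1,i+1)·x^{i+1} + k·C(k,i)·x^i ]. -/

import Mathlib

/-!
Write `(n+k)·(n+k)!/(n!)² = k!·(n+k)·C(n+k,k)/n!`. Since
`(n+k)·C(n+k,k) = (k+1)·C(n+k,k+1) + k·C(n+k,k)`, Vandermonde's identity turns this into a
combination of the `C(n,j)`, `j ≤ k+1`, with coefficients independent of `n`. Each series
`Σₙ C(n,j)·xⁿ/n!` is a shifted exponential series with sum `x^j·eˣ/j!`.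
-/

open Finset Nat

theorem Nat.add_choose_add_eq_sum (n k r : ℕ) :
    (n + k).choose (k + r) = ∑ i ∈ range (k + 1), k.choose i * n.choose (i + r) := by
  rw [add_comm n, Nat.add_choose_eq, Finset.Nat.sum_antidiagonal_eq_sum_range_succ_mk,
    show (k + r).succ = (k + 1) + r by omega, Finset.sum_range_add,
    ← Finset.sum_range_reflect]
  have hvanish : ∑ j ∈ range r, k.choose (k + 1 + j) * n.choose (k + r - (k + 1 + j)) = 0 :=
    Finset.sum_eq_zero fun j _ => by rw [Nat.choose_eq_zero_of_lt (by omega), zero_mul]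
  rw [hvanish, add_zero]
  refine Finset.sum_congr rfl fun i hi => ?_
  have hik : i ≤ k := Nat.lt_succ_iff.mp (mem_range.mp hi)
  rw [show k + 1 - 1 - i = k - i by omega, Nat.choose_symm hik,
    show k + r - (k - i) = i + r by omega]

theorem Nat.add_mul_add_choose_eq_sum (n k : ℕ) :
    (n + k) * (n + k).choose k =
      ∑ i ∈ range (k + 1), k.choose i * ((k + 1) * n.choose (i + 1) + k * n.choose i) := by
  have hsplit :
      (n + k) * (n + k).choose k = (k + 1) * (n + k).choose (k + 1) + k * (n + k).choose k := by
    have := Nat.choose_succ_right_eq (n + k) k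
    rw [Nat.add_sub_cancel] at this
    linarith
  have h1 := Nat.add_choose_add_eq_sum n k 1
  have h0 := Nat.add_choose_add_eq_sum n k 0
  simp only [add_zero] at h0
  rw [hsplit, h1, h0, Finset.mul_sum, Finset.mul_sum, ← Finset.sum_add_distrib]
  exact Finset.sum_congr rfl fun i _ => by ring

theorem Real.hasSum_choose_mul_pow_div_factorial (x : ℝ) (j : ℕ) :
    HasSum (fun n => (n.choose j : ℝ) * x ^ n / n !) (x ^ j / j ! * Real.exp x) := by
  rw [← hasSum_nat_add_iff' j]
  have hvanish : ∑ n ∈ range j, (n.choose j : ℝ) * x ^ n / n ! = 0 :=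
    Finset.sum_eq_zero fun n hn => by simp [Nat.choose_eq_zero_of_lt (mem_range.mp hn)]
  have hshift : ∀ m,
      ((m + j).choose j : ℝ) * x ^ (m + j) / (m + j)! = x ^ j / j ! * (x ^ m / m !) := by
    intro m
    rw [← Nat.add_choose_mul_factorial_mul_factorial m j]
    have := Nat.choose_pos (Nat.le_add_left j m)
    push_cast
    field_simp
    ring
  simp only [hvanish, sub_zero, hshift, Real.exp_eq_exp_ℝ]
  exact (NormedSpace.expSeries_div_hasSum_exp x).mul_left _

theorem cast_add_mul_factorial_mul_pow_div_sq_eq_sum (x : ℝ) (n k : ℕ) :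
    ((n + k : ℕ) : ℝ) * (n + k)! * x ^ (n + k) / (n ! : ℝ) ^ 2 =
      ∑ i ∈ range (k + 1), k ! * x ^ k * k.choose i *
        ((k + 1) * (n.choose (i + 1) * x ^ n / n !) + k * (n.choose i * x ^ n / n !)) := by
  have hcomb : ((n + k : ℕ) : ℝ) * (n + k).choose k =
      ∑ i ∈ range (k + 1), (k.choose i : ℝ) * ((k + 1) * n.choose (i + 1) + k * n.choose i) := by
    exact_mod_cast Nat.add_mul_add_choose_eq_sum n k
  have hn : (n ! : ℝ) ≠ 0 := by positivity
  calc ((n + k : ℕ) : ℝ) * (n + k)! * x ^ (n + k) / (n ! : ℝ) ^ 2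
      = k ! * x ^ k * (((n + k : ℕ) : ℝ) * (n + k).choose k) * (x ^ n / n !) := by
        rw [← Nat.add_choose_mul_factorial_mul_factorial n k]
        push_cast
        field_simp
        ring
    _ = _ := by
        rw [hcomb, Finset.mul_sum, Finset.sum_mul]
        exact Finset.sum_congr rfl fun i _ => by ring

theorem factorial_mul_choose_mul_exp_eq (x : ℝ) (k i : ℕ) :
    k ! * x ^ k * k.choose i *
        ((k + 1) * (x ^ (i + 1) / (i + 1)! * Real.exp x) + k * (x ^ i / i ! * Real.exp x)) =
      Real.exp x * x ^ k * ((k ! / i ! : ℝ) *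
        ((k + 1).choose (i + 1) * x ^ (i + 1) + k * k.choose i * x ^ i)) := by
  have hchoose : ((k + 1 : ℝ)) * k.choose i = (k + 1).choose (i + 1) * (i + 1) := by
    exact_mod_cast Nat.add_one_mul_choose_eq k i
  have hi : (i ! : ℝ) ≠ 0 := by positivity
  rw [Nat.factorial_succ]
  push_cast
  field_simp
  linear_combination x ^ k * x ^ (i + 1) * hchoose

theorem stmt_2_general (x : ℝ) (k : ℕ) :
    ∑' n : ℕ, ((n + k : ℕ) : ℝ) * ((n + k).factorial : ℝ) * x ^ (n + k) /
      ((n.factorial : ℝ)) ^ 2 =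
    Real.exp x * x ^ k * ∑ i ∈ Finset.range (k + 1),
      ((k.factorial : ℝ) / (i.factorial : ℝ)) *
        ((Nat.choose (k + 1) (i + 1) : ℝ) * x ^ (i + 1) + (k : ℝ) * (Nat.choose k i : ℝ) * x ^ i) := by
  have hsum := hasSum_sum fun i (_ : i ∈ range (k + 1)) =>
    (((Real.hasSum_choose_mul_pow_div_factorial x (i + 1)).mul_left ((k : ℝ) + 1)).add
      ((Real.hasSum_choose_mul_pow_div_factorial x i).mul_left (k : ℝ))).mul_left
        ((k ! : ℝ) * x ^ k * k.choose i)
  simp only [← cast_add_mul_factorial_mul_pow_div_sq_eq_sum, factorial_mul_choose_mul_exp_eq]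
    at hsum
  rw [hsum.tsum_eq, Finset.mul_sum]

theorem stmt_2 (x : ℝ) (hx0 : 0 ≤ x) (hx1 : x < 1) (k : ℕ) :
    ∑' n : ℕ, ((n + k : ℕ) : ℝ) * ((n + k).factorial : ℝ) * x ^ (n + k) /
      ((n.factorial : ℝ)) ^ 2 =
    Real.exp x * x ^ k * ∑ i ∈ Finset.range (k + 1),
      ((k.factorial : ℝ) / (i.factorial : ℝ)) *
        ((Nat.choose (k + 1) (i + 1) : ℝ) * x ^ (i + 1) + (k : ℝ) * (Nat.choose k i : ℝ) * x ^ i) :=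
  stmt_2_general x k
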